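/- Let |ψ⟩ be a unit vector in a bipartite Hilbert space H_A ⊗ H_B with Schmidt decomposition |ψ⟩ = ∑_j √p_j |j⟩_A ⊗ |j⟩_B, where p_1 ≥ p_2 ≥ ⋯ ≥ 0 sum to 1 and the entanglement entropy S = −∑_j p_j log p_j is finite. For M ≥ 2, let P_M be the orthogonal projector onto the span of |1⟩_A, …, |M⟩_A and |ψ_M⟩ = (P_M ⊗ I)|ψ⟩ / ‖(P_M ⊗ I)|ψ⟩‖. Then |⟨ψ|ψ_M⟩|² = ∑_{j=1}^M p_j ≥ 1 − S/log M. -/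

import Mathlib

open scoped BigOperators InnerProductSpace

/-! The overlap `⟨ψ|ψ_M⟩` is `(∑_{j<M} p_j)^{1/2}` by orthonormality, which gives the equality.
For the bound, monotonicity gives `M p_j ≤ ∑_{i<M} p_i ≤ 1` for `j ≥ M`, so every tail term has
`-log p_j ≥ log M`; hence `(1 - ∑_{j<M} p_j) log M = ∑_{j≥M} p_j log M ≤ ∑_{j≥M} -p_j log p_j ≤ S`,
the last step because all entropy terms are nonnegative. -/

open Finset Real

section Orthonormal

variable {ι 𝕜 E : Type*} [RCLike 𝕜] [NormedAddCommGroup E] [InnerProductSpace 𝕜 E]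
  {v : ι → E}

theorem Orthonormal.summable_smul_iff [CompleteSpace E] (hv : Orthonormal 𝕜 v) (l : ι → 𝕜) :
    Summable (fun i => l i • v i) ↔ Summable fun i => ‖l i‖ ^ 2 :=
  hv.orthogonalFamily.summable_iff_norm_sq_summable l

theorem Orthonormal.inner_right_tsum (hv : Orthonormal 𝕜 v) {l : ι → 𝕜}
    (hl : Summable fun i => l i • v i) (i : ι) : ⟪v i, ∑' j, l j • v j⟫_𝕜 = l i := by
  rw [← innerSL_apply_apply, (innerSL 𝕜 (v i)).map_tsum hl, tsum_eq_single i]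
  · simp [hv.1 i]
  · intro j hj
    simp [hv.2 (Ne.symm hj)]

end Orthonormal

theorem Orthonormal.inner_tsum_sqrt_smul_sum_sqrt_smul {ι E : Type*} [NormedAddCommGroup E]
    [InnerProductSpace ℂ E] [CompleteSpace E] {u : ι → E} (hu : Orthonormal ℂ u) {p : ι → ℝ}
    (hnn : ∀ j, 0 ≤ p j) (hp : Summable p) (s : Finset ι) :
    ⟪∑' j, (√(p j) : ℂ) • u j, ∑ j ∈ s, (√(p j) : ℂ) • u j⟫_ℂ = ((∑ j ∈ s, p j : ℝ) : ℂ) := by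
  have hsummable : Summable fun j => (√(p j) : ℂ) • u j := by
    rw [hu.summable_smul_iff]
    simpa [Complex.norm_real, sq_abs, sq_sqrt (hnn _)] using hp
  rw [inner_sum, Complex.ofReal_sum]
  refine sum_congr rfl fun j _ => ?_
  rw [inner_smul_right, ← inner_conj_symm, hu.inner_right_tsum hsummable, Complex.conj_ofReal,
    ← Complex.ofReal_mul, mul_self_sqrt (hnn j)]

theorem Real.mul_log_le_negMulLog {x a : ℝ} (hx : 0 ≤ x) (ha : 0 < a) (hxa : x * a ≤ 1) :
    x * log a ≤ negMulLog x := by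
  rcases hx.eq_or_lt with rfl | hx
  · simp
  have hlog : log x + log a ≤ 0 := by
    rw [← log_mul hx.ne' ha.ne']
    exact log_nonpos (by positivity) hxa
  rw [negMulLog, neg_mul, ← mul_neg]
  exact mul_le_mul_of_nonneg_left (by linarith) hx.le

theorem Antitone.mul_le_of_hasSum {p : ℕ → ℝ} (hmono : Antitone p) (hnn : ∀ j, 0 ≤ p j)
    {s : ℝ} (hsum : HasSum p s) {M j : ℕ} (hj : M ≤ j) : p j * M ≤ s :=
  calc p j * M = ∑ _i ∈ range M, p j := by simp [mul_comm]
    _ ≤ ∑ i ∈ range M, p i := sum_le_sum fun i hi => hmono ((mem_range.mp hi).le.trans hj)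
    _ ≤ s := sum_le_hasSum _ (fun i _ => hnn i) hsum

theorem Antitone.one_sub_sum_range_mul_log_le_tsum_negMulLog {p : ℕ → ℝ} (hmono : Antitone p)
    (hnn : ∀ j, 0 ≤ p j) (hsum : HasSum p 1)
    (hent : Summable fun j => p j * log (p j)) {M : ℕ} (hM : 0 < M) :
    (1 - ∑ j ∈ range M, p j) * log M ≤ ∑' j, negMulLog (p j) := by
  have hent' : Summable fun j => negMulLog (p j) := by
    simpa only [negMulLog, neg_mul] using hent.neg
  have htail : 1 - ∑ j ∈ range M, p j = ∑' i, p (i + M) := by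
    rw [← hsum.tsum_eq, ← hsum.summable.sum_add_tsum_nat_add M]
    ring
  have hhead : 0 ≤ ∑ j ∈ range M, negMulLog (p j) :=
    sum_nonneg fun j _ => negMulLog_nonneg (hnn j) (le_hasSum hsum j fun i _ => hnn i)
  calc (1 - ∑ j ∈ range M, p j) * log M = ∑' i, p (i + M) * log M := by
        rw [htail, tsum_mul_right]
    _ ≤ ∑' i, negMulLog (p (i + M)) :=
        Summable.tsum_le_tsum
          (fun i => mul_log_le_negMulLog (hnn _) (by positivity)
            (hmono.mul_le_of_hasSum hnn hsum (Nat.le_add_left M i)))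
          (((summable_nat_add_iff M).mpr hsum.summable).mul_right _)
          ((summable_nat_add_iff M).mpr hent')
    _ ≤ ∑' j, negMulLog (p j) := by
        rw [← hent'.sum_add_tsum_nat_add M]
        linarith

theorem schmidt_truncation_fidelity_general
    {E : Type*} [NormedAddCommGroup E] [InnerProductSpace ℂ E] [CompleteSpace E]
    (u : ℕ → E) (hu : Orthonormal ℂ u)
    (p : ℕ → ℝ) (M : ℕ) (hM : 2 ≤ M)
    (hnn : ∀ j, 0 ≤ p j) (hmono : Antitone p) (hsum : HasSum p 1)
    (hent : Summable (fun j => p j * Real.log (p j)))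
    (ψ ψM : E)
    (hψ : ψ = ∑' j, (Real.sqrt (p j) : ℂ) • u j)
    (hψM : ψM = (Real.sqrt (∑ j ∈ Finset.range M, p j) : ℂ)⁻¹ •
        ∑ j ∈ Finset.range M, (Real.sqrt (p j) : ℂ) • u j) :
    ‖⟪ψ, ψM⟫_ℂ‖ ^ 2 = ∑ j ∈ Finset.range M, p j
    ∧ 1 - (-∑' j, p j * Real.log (p j)) / Real.log M ≤ ∑ j ∈ Finset.range M, p j := by
  set P := ∑ j ∈ range M, p j
  have hP : 0 ≤ P := sum_nonneg fun j _ => hnn j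
  have hoverlap : ⟪ψ, ψM⟫_ℂ = (√P : ℂ) := by
    rw [hψ, hψM, inner_smul_right, hu.inner_tsum_sqrt_smul_sum_sqrt_smul hnn hsum.summable,
      ← Complex.ofReal_inv, ← Complex.ofReal_mul, inv_mul_eq_div, div_sqrt]
  refine ⟨by rw [hoverlap, Complex.norm_real, norm_of_nonneg (sqrt_nonneg P), sq_sqrt hP], ?_⟩
  have hlogM : 0 < log M := log_pos (by exact_mod_cast hM)
  have hentropy : -∑' j, p j * log (p j) = ∑' j, negMulLog (p j) := by
    simp only [negMulLog, neg_mul, tsum_neg]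
  rw [hentropy, sub_le_comm, le_div_iff₀ hlogM]
  exact hmono.one_sub_sum_range_mul_log_le_tsum_negMulLog hnn hsum hent (by omega)

/-- Let `|ψ⟩ = ∑_j √p_j |j⟩_A ⊗ |j⟩_B` be a unit vector in a
bipartite Hilbert space with ordered Schmidt coefficients `p` summing to `1`
and finite entanglement entropy `S = −∑_j p_j log p_j`. The Schmidt vectors
`|j⟩_A ⊗ |j⟩_B` form an orthonormal family `u` of the tensor-product Hilbert
space `E`. For `M ≥ 2`, the normalized truncation
`|ψ_M⟩ = (P_M ⊗ I)|ψ⟩/‖(P_M ⊗ I)|ψ⟩‖ = (∑_{j<M} √p_j u j)/(∑_{j<M} p_j)^{1/2}`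
satisfies `|⟨ψ|ψ_M⟩|² = ∑_{j<M} p_j ≥ 1 − S/log M`. -/
theorem schmidt_truncation_fidelity
    {E : Type*} [NormedAddCommGroup E] [InnerProductSpace ℂ E] [CompleteSpace E]
    (u : ℕ → E) (hu : Orthonormal ℂ u)
    (p : ℕ → ℝ) (M : ℕ) (hM : 2 ≤ M)
    (hnn : ∀ j, 0 ≤ p j) (hmono : Antitone p) (hsum : HasSum p 1)
    (hent : Summable (fun j => p j * Real.log (p j)))
    (hpos : 0 < ∑ j ∈ Finset.range M, p j)
    (ψ ψM : E)
    (hψ : ψ = ∑' j, (Real.sqrt (p j) : ℂ) • u j)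
    (hψM : ψM = (Real.sqrt (∑ j ∈ Finset.range M, p j) : ℂ)⁻¹ •
        ∑ j ∈ Finset.range M, (Real.sqrt (p j) : ℂ) • u j) :
    ‖⟪ψ, ψM⟫_ℂ‖ ^ 2 = ∑ j ∈ Finset.range M, p j
    ∧ 1 - (-∑' j, p j * Real.log (p j)) / Real.log M ≤ ∑ j ∈ Finset.range M, p j :=
  schmidt_truncation_fidelity_general u hu p M hM hnn hmono hsum hent ψ ψM hψ hψM
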